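/- Let p ∈ ℕ and let d : ℕ → ℕ satisfy d(n) ≤ 1 for all n ≤ 6(p + 1), and d(n) ≤ d(⌊n/2⌋ + p + 1) + 1 for all n > 6(p + 1). Then for every n ≥ 2, d(n) ≤ (log n)/(log 1.5), i.e. d(n) ≤ log_{1.5} n. -/
import Mathlib

/-- if `d : ℕ → ℕ` satisfies `d n ≤ 1` for `n ≤ 6 (p + 1)` and
`d n ≤ d (⌊n / 2⌋ + p + 1) + 1` for `n > 6 (p + 1)`, then `d n ≤ log n / log 1.5`
for every `n ≥ 2`, i.e. `d n ≤ log_{1.5} n`. -/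
theorem stmt_3 (p : ℕ) (d : ℕ → ℕ)
    (hbase : ∀ n : ℕ, n ≤ 6 * (p + 1) → d n ≤ 1)
    (hrec : ∀ n : ℕ, 6 * (p + 1) < n → d n ≤ d (n / 2 + p + 1) + 1) :
    ∀ n : ℕ, 2 ≤ n → (d n : ℝ) ≤ Real.log n / Real.log 1.5 := by
  have hl : (0:ℝ) < Real.log 1.5 := Real.log_pos (by norm_num)
  intro n
  induction n using Nat.strong_induction_on with
  | _ n ih =>
    intro hn
    by_cases h : n ≤ 6 * (p + 1)
    · have hd := hbase n h
      have h2 : Real.log 1.5 ≤ Real.log n := by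
        apply Real.log_le_log (by norm_num)
        have : (2:ℝ) ≤ n := by exact_mod_cast hn
        linarith
      calc (d n : ℝ) ≤ 1 := by exact_mod_cast hd
        _ ≤ Real.log n / Real.log 1.5 := by
            rw [le_div_iff₀ hl]; linarith
    · push_neg at h
      set m := n / 2 + p + 1 with hm
      have hm2 : 2 ≤ m := by omega
      have hmn : m < n := by omega
      have hmpos : (0:ℝ) < m := by positivity
      have hkey : (1.5:ℝ) * m ≤ n := by
        have h1 : 2 * (n / 2) ≤ n := by omega
        have h1' : (2:ℝ) * ((n / 2 : ℕ) : ℝ) ≤ n := by exact_mod_cast h1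
        have h2' : (6:ℝ) * ((p:ℝ) + 1) + 1 ≤ n := by exact_mod_cast h
        have hmr : (m:ℝ) = ((n / 2 : ℕ) : ℝ) + p + 1 := by
          rw [hm]; push_cast; ring
        rw [hmr]; linarith
      have ihm := ih m hmn hm2
      have hrn := hrec n h
      have hlog : Real.log (1.5 * m) ≤ Real.log n :=
        Real.log_le_log (by positivity) hkey
      rw [Real.log_mul (by norm_num) (ne_of_gt hmpos)] at hlog
      calc (d n : ℝ) ≤ (d m : ℝ) + 1 := by exact_mod_cast hrn
        _ ≤ Real.log m / Real.log 1.5 + 1 := by linarith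
        _ ≤ Real.log n / Real.log 1.5 := by
            rw [div_add_one (ne_of_gt hl)]
            exact (div_le_div_iff_of_pos_right hl).mpr (by linarith)
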